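/- For the simple edge-valued random walk on the regular triangulation of the 2-torus with mesh 2ε_n, the smallest non-zero eigenvalue λ_m^n of the 1-dimensional up-Laplacian L_1^↑ satisfies λ_m^n ≥ C ε_n², where the lower bound follows from the Diaconis–Stroock path bound λ_m^n ≥ 2|S_1^+| / (25 d b) with |S_1^+| = O(ε_n^{-2}) edges, diameter d = O(ε_n^{-1}) and edge-congestion b = O(ε_n^{-3}). -/

import Mathlib

/-- Vertices of the regular triangulation of the flat torus with mesh `2εₙ = 2/n`:
a 2-dimensional discrete torus. -/
abbrev TorusVertex (n : ℕ) := ZMod n × ZMod n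

/-- Oriented edges of the triangulation: each vertex `v` carries the three edges
`[v, v+a]`, `[v, v+b]`, `[v, v+a+b]` in the three lattice directions. -/
abbrev TorusEdge (n : ℕ) := TorusVertex n × Fin 3

/-- Triangles of the triangulation: each fundamental parallelogram `{v, v+a, v+b, v+a+b}`
splits into an upward triangle `(v, v+a, v+a+b)` and a downward one `(v, v+b, v+a+b)`. -/
abbrev TorusTriangle (n : ℕ) := TorusVertex n × Bool

/-- The boundary `∂₂τ` of an oriented triangle, as a 1-chain (an element of the Euclidean
space with orthonormal basis the oriented edges). -/
noncomputable def triangleBoundary (n : ℕ) [NeZero n] (t : TorusTriangle n) :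
    EuclideanSpace ℝ (TorusEdge n) :=
  if t.2 then
    EuclideanSpace.single (t.1 + ((1 : ZMod n), (0 : ZMod n)), (1 : Fin 3)) (1 : ℝ)
      - EuclideanSpace.single (t.1, (2 : Fin 3)) 1
      + EuclideanSpace.single (t.1, (0 : Fin 3)) 1
  else
    EuclideanSpace.single (t.1 + ((0 : ZMod n), (1 : ZMod n)), (0 : Fin 3)) (1 : ℝ)
      - EuclideanSpace.single (t.1, (2 : Fin 3)) 1
      + EuclideanSpace.single (t.1, (1 : Fin 3)) 1

/-- The up-Laplacian `L₁^↑ = ∂₂∂₂^*` of the triangulation of the torus, acting on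
1-chains: `L₁^↑ x = ∑_τ ⟨∂₂τ, x⟩ ∂₂τ`. -/
noncomputable def torusUpLaplacian (n : ℕ) [NeZero n] :
    Module.End ℝ (EuclideanSpace ℝ (TorusEdge n)) :=
  ∑ t : TorusTriangle n,
    ((innerSL ℝ (triangleBoundary n t)).smulRight (triangleBoundary n t)).toLinearMap

/-!
Since `L₁^↑ = ∂₂∂₂^*`, an eigenvector `x` for `μ ≠ 0` has a non-zero circulation `∂₂^* x` around
the triangles, an eigenvector of `∂₂^*∂₂ = 3 + A` with `A` the adjacency operator of the dual
honeycomb graph. That graph is bipartite between up- and down-triangles, so applying the relation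
twice shows that the circulation around the up-triangles is an eigenfunction of the Laplacian of
the triangular lattice, with eigenvalue `9 - (μ - 3)² = 6μ - μ²`. The Diaconis–Stroock path
argument (join `v` to `v + s` by at most `n` steps in each lattice direction) gives the Poincaré
inequality `∑ g² ≤ n² · energy` for mean-zero `g`, so `6μ - μ² ≥ 1 / n²` and `μ ≥ 1 / (6 n²)`.
-/

open Finset

namespace TorusGap

variable {G : Type*} [AddCommGroup G] [Fintype G]

noncomputable def shiftEnergy (g : G → ℝ) (s : G) : ℝ :=
  ∑ v, (g (v + s) - g v) ^ 2

def secondDiff (g : G → ℝ) (s v : G) : ℝ :=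
  2 * g v - g (v + s) - g (v - s)

def triangularLaplacian (a b : G) (g : G → ℝ) (v : G) : ℝ :=
  secondDiff g a v + secondDiff g b v + secondDiff g (a + b) v

lemma sum_comp_add_right (f : G → ℝ) (s : G) : ∑ v, f (v + s) = ∑ v, f v :=
  Equiv.sum_comp (Equiv.addRight s) f

lemma sum_comp_sub_right (f : G → ℝ) (s : G) : ∑ v, f (v - s) = ∑ v, f v :=
  Equiv.sum_comp (Equiv.subRight s) f

lemma shiftEnergy_nonneg (g : G → ℝ) (s : G) : 0 ≤ shiftEnergy g s :=
  sum_nonneg fun _ _ => sq_nonneg _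

lemma shiftEnergy_eq (g : G → ℝ) (s : G) :
    shiftEnergy g s = 2 * ∑ v, g v ^ 2 - 2 * ∑ v, g v * g (v + s) := by
  have h := sum_comp_add_right (fun v => g v ^ 2) s
  have expand : ∀ v, (g (v + s) - g v) ^ 2 = g (v + s) ^ 2 + g v ^ 2 - 2 * (g v * g (v + s)) :=
    fun v => by ring
  simp only [shiftEnergy, expand, sum_sub_distrib, sum_add_distrib, h, ← mul_sum]
  ring

lemma sum_secondDiff (g : G → ℝ) (s : G) : ∑ v, secondDiff g s v = 0 := by
  simp only [secondDiff, sum_sub_distrib, ← mul_sum, sum_comp_add_right g s,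
    sum_comp_sub_right g s]
  ring

lemma sum_secondDiff_mul_self (g : G → ℝ) (s : G) :
    ∑ v, secondDiff g s v * g v = shiftEnergy g s := by
  have h : ∑ v, g (v - s) * g v = ∑ v, g v * g (v + s) := by
    simpa using sum_comp_sub_right (fun v => g v * g (v + s)) s
  simp only [secondDiff, sub_mul, sum_sub_distrib, mul_assoc, ← mul_sum, h, shiftEnergy_eq]
  simp only [mul_comm (g (_ + s)), pow_two]
  ring

lemma sum_triangularLaplacian (a b : G) (g : G → ℝ) : ∑ v, triangularLaplacian a b g v = 0 := by
  simp only [triangularLaplacian, sum_add_distrib, sum_secondDiff, add_zero]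

lemma sum_triangularLaplacian_mul_self (a b : G) (g : G → ℝ) :
    ∑ v, triangularLaplacian a b g v * g v =
      shiftEnergy g a + shiftEnergy g b + shiftEnergy g (a + b) := by
  simp only [triangularLaplacian, add_mul, sum_add_distrib, sum_secondDiff_mul_self]

lemma shiftEnergy_add_le (g : G → ℝ) (s t : G) :
    shiftEnergy g (s + t) ≤ 2 * shiftEnergy g s + 2 * shiftEnergy g t := by
  have h : shiftEnergy g t = ∑ v, (g (v + s + t) - g (v + s)) ^ 2 :=
    (sum_comp_add_right (fun v => (g (v + t) - g v) ^ 2) s).symm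
  rw [h, shiftEnergy, shiftEnergy, mul_sum, mul_sum, ← sum_add_distrib]
  refine sum_le_sum fun v _ => ?_
  rw [← add_assoc]
  nlinarith [sq_nonneg (g (v + s + t) - 2 * g (v + s) + g v)]

lemma shiftEnergy_nsmul_le (g : G → ℝ) (s : G) (k : ℕ) :
    shiftEnergy g (k • s) ≤ k ^ 2 * shiftEnergy g s := by
  have telescope : ∀ v,
      g (v + k • s) - g v = ∑ i ∈ range k, (g (v + i • s + s) - g (v + i • s)) := by
    intro v
    simpa [succ_nsmul, add_assoc] using (sum_range_sub (fun i => g (v + i • s)) k).symm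
  calc shiftEnergy g (k • s)
      ≤ ∑ v, k * ∑ i ∈ range k, (g (v + i • s + s) - g (v + i • s)) ^ 2 :=
        sum_le_sum fun v _ => by
          simpa [telescope v] using sq_sum_le_card_mul_sum_sq (s := range k)
            (f := fun i => g (v + i • s + s) - g (v + i • s))
    _ = k * ∑ i ∈ range k, shiftEnergy g s := by
        rw [← mul_sum, sum_comm]
        congr 1
        exact sum_congr rfl fun i _ =>
          sum_comp_add_right (fun v => (g (v + s) - g v) ^ 2) (i • s)
    _ = k ^ 2 * shiftEnergy g s := by
        rw [sum_const, card_range, nsmul_eq_mul]; ring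

lemma sum_shiftEnergy (g : G → ℝ) :
    ∑ s, shiftEnergy g s = 2 * Fintype.card G * ∑ v, g v ^ 2 - 2 * (∑ v, g v) ^ 2 := by
  have h : ∀ v, ∑ s, g v * g (v + s) = g v * ∑ w, g w := fun v => by
    rw [mul_sum]; exact Equiv.sum_comp (Equiv.addLeft v) (fun w => g v * g w)
  simp only [shiftEnergy_eq, sum_sub_distrib, ← mul_sum, sum_const, card_univ, nsmul_eq_mul,
    sum_comm (γ := G) (f := fun s v => g v * g (v + s)), h, pow_two, sum_mul]
  ring

section Torus

variable {n : ℕ} [NeZero n]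

lemma torus_shiftEnergy_le (g : TorusVertex n → ℝ) (s : TorusVertex n) :
    shiftEnergy g s ≤ 2 * n ^ 2 * (shiftEnergy g (1, 0) + shiftEnergy g (0, 1)) := by
  have hs : s = s.1.val • ((1, 0) : TorusVertex n) + s.2.val • ((0, 1) : TorusVertex n) := by
    simp
  have hk : (s.1.val : ℝ) ^ 2 ≤ n ^ 2 := by gcongr; exact_mod_cast (ZMod.val_lt s.1).le
  have hl : (s.2.val : ℝ) ^ 2 ≤ n ^ 2 := by gcongr; exact_mod_cast (ZMod.val_lt s.2).le
  calc shiftEnergy g s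
      ≤ 2 * shiftEnergy g (s.1.val • ((1, 0) : TorusVertex n))
        + 2 * shiftEnergy g (s.2.val • ((0, 1) : TorusVertex n)) := by
        conv_lhs => rw [hs]
        exact shiftEnergy_add_le g _ _
    _ ≤ 2 * (s.1.val ^ 2 * shiftEnergy g (1, 0)) + 2 * (s.2.val ^ 2 * shiftEnergy g (0, 1)) := by
        gcongr <;> exact shiftEnergy_nsmul_le g _ _
    _ ≤ 2 * n ^ 2 * (shiftEnergy g (1, 0) + shiftEnergy g (0, 1)) := by
        nlinarith [shiftEnergy_nonneg g (1, 0), shiftEnergy_nonneg g (0, 1)]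

lemma torus_sum_sq_le_of_sum_eq_zero (g : TorusVertex n → ℝ) (hg : ∑ v, g v = 0) :
    ∑ v, g v ^ 2 ≤ n ^ 2 * (shiftEnergy g (1, 0) + shiftEnergy g (0, 1)) := by
  have hcard : (Fintype.card (TorusVertex n) : ℝ) = n ^ 2 := by
    simp [Fintype.card_prod, ZMod.card, sq]
  have hn : (0 : ℝ) < n ^ 2 := by have := NeZero.pos n; positivity
  have key := sum_shiftEnergy g
  rw [hg, hcard] at key
  have hsum := sum_le_sum fun s (_ : s ∈ univ) => torus_shiftEnergy_le g s
  rw [key, sum_const, card_univ, nsmul_eq_mul, hcard] at hsum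
  nlinarith

lemma one_le_sq_mul_of_triangularLaplacian_eq_mul (g : TorusVertex n → ℝ) {lam : ℝ}
    (hg : ∀ v, triangularLaplacian (1, 0) (0, 1) g v = lam * g v) (hne : g ≠ 0)
    (hlam : lam ≠ 0) :
    1 ≤ n ^ 2 * lam := by
  have hmean : ∑ v, g v = 0 := by
    have h := sum_triangularLaplacian ((1, 0) : TorusVertex n) (0, 1) g
    simp only [hg, ← mul_sum] at h
    exact (mul_eq_zero.mp h).resolve_left hlam
  have hrayleigh : lam * ∑ v, g v ^ 2 = shiftEnergy g (1, 0) + shiftEnergy g (0, 1)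
      + shiftEnergy g ((1, 0) + (0, 1)) := by
    rw [← sum_triangularLaplacian_mul_self, mul_sum]
    exact sum_congr rfl fun v _ => by rw [hg]; ring
  have hpos : 0 < ∑ v, g v ^ 2 := by
    obtain ⟨v, hv⟩ := Function.ne_iff.mp hne
    exact sum_pos' (fun v _ => sq_nonneg _) ⟨v, mem_univ v, sq_pos_of_ne_zero hv⟩
  nlinarith [torus_sum_sq_le_of_sum_eq_zero g hmean, shiftEnergy_nonneg g ((1, 0) + (0, 1))]

end Torus

section Circulation

open RealInnerProductSpace

variable {n : ℕ} [NeZero n]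

noncomputable def upCirculation (x : EuclideanSpace ℝ (TorusEdge n)) (v : TorusVertex n) : ℝ :=
  ⟪triangleBoundary n (v, true), x⟫

noncomputable def downCirculation (x : EuclideanSpace ℝ (TorusEdge n)) (v : TorusVertex n) : ℝ :=
  ⟪triangleBoundary n (v, false), x⟫

lemma upCirculation_eq (x : EuclideanSpace ℝ (TorusEdge n)) (v : TorusVertex n) :
    upCirculation x v = x (v + (1, 0), 1) - x (v, 2) + x (v, 0) := by
  simp [upCirculation, triangleBoundary, inner_add_left, inner_sub_left,
    EuclideanSpace.inner_single_left]

lemma downCirculation_eq (x : EuclideanSpace ℝ (TorusEdge n)) (v : TorusVertex n) :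
    downCirculation x v = x (v + (0, 1), 0) - x (v, 2) + x (v, 1) := by
  simp [downCirculation, triangleBoundary, inner_add_left, inner_sub_left,
    EuclideanSpace.inner_single_left]

lemma torusUpLaplacian_apply (x : EuclideanSpace ℝ (TorusEdge n)) (e : TorusEdge n) :
    torusUpLaplacian n x e = ∑ v, (upCirculation x v * triangleBoundary n (v, true) e
      + downCirculation x v * triangleBoundary n (v, false) e) := by
  simp [torusUpLaplacian, LinearMap.sum_apply, Fintype.sum_prod_type, upCirculation,
    downCirculation]

lemma torusUpLaplacian_apply_zero (x : EuclideanSpace ℝ (TorusEdge n)) (w : TorusVertex n) :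
    torusUpLaplacian n x (w, 0) = upCirculation x w + downCirculation x (w - (0, 1)) := by
  simp [torusUpLaplacian_apply, triangleBoundary, sum_add_distrib,
    ← sub_eq_iff_eq_add]

lemma torusUpLaplacian_apply_one (x : EuclideanSpace ℝ (TorusEdge n)) (w : TorusVertex n) :
    torusUpLaplacian n x (w, 1) = upCirculation x (w - (1, 0)) + downCirculation x w := by
  simp [torusUpLaplacian_apply, triangleBoundary, sum_add_distrib,
    ← sub_eq_iff_eq_add]

lemma torusUpLaplacian_apply_two (x : EuclideanSpace ℝ (TorusEdge n)) (w : TorusVertex n) :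
    torusUpLaplacian n x (w, 2) = -upCirculation x w - downCirculation x w := by
  simp [torusUpLaplacian_apply, triangleBoundary, sum_add_distrib, sub_eq_add_neg]

lemma upCirculation_smul (μ : ℝ) (x : EuclideanSpace ℝ (TorusEdge n)) (v : TorusVertex n) :
    upCirculation (μ • x) v = μ * upCirculation x v := by
  simp [upCirculation, inner_smul_right]

lemma downCirculation_smul (μ : ℝ) (x : EuclideanSpace ℝ (TorusEdge n)) (v : TorusVertex n) :
    downCirculation (μ • x) v = μ * downCirculation x v := by
  simp [downCirculation, inner_smul_right]

lemma upCirculation_torusUpLaplacian (x : EuclideanSpace ℝ (TorusEdge n)) (v : TorusVertex n) :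
    upCirculation (torusUpLaplacian n x) v = 3 * upCirculation x v
      + downCirculation x (v + (1, 0)) + downCirculation x v + downCirculation x (v - (0, 1)) := by
  rw [upCirculation_eq, torusUpLaplacian_apply_zero, torusUpLaplacian_apply_one,
    torusUpLaplacian_apply_two, add_sub_cancel_right]
  ring

lemma downCirculation_torusUpLaplacian (x : EuclideanSpace ℝ (TorusEdge n)) (v : TorusVertex n) :
    downCirculation (torusUpLaplacian n x) v = 3 * downCirculation x v
      + upCirculation x (v + (0, 1)) + upCirculation x v + upCirculation x (v - (1, 0)) := by
  rw [downCirculation_eq, torusUpLaplacian_apply_zero, torusUpLaplacian_apply_one,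
    torusUpLaplacian_apply_two, add_sub_cancel_right]
  ring

lemma triangularLaplacian_upCirculation {μ : ℝ} {x : EuclideanSpace ℝ (TorusEdge n)}
    (hx : torusUpLaplacian n x = μ • x) (v : TorusVertex n) :
    triangularLaplacian (1, 0) (0, 1) (upCirculation x) v =
      (6 * μ - μ ^ 2) * upCirculation x v := by
  have up : ∀ w, (μ - 3) * upCirculation x w = downCirculation x (w + (1, 0))
      + downCirculation x w + downCirculation x (w - (0, 1)) := fun w => by
    have := upCirculation_torusUpLaplacian x w
    rw [hx, upCirculation_smul] at this
    linarith
  have down : ∀ w, (μ - 3) * downCirculation x w = upCirculation x (w + (0, 1))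
      + upCirculation x w + upCirculation x (w - (1, 0)) := fun w => by
    have := downCirculation_torusUpLaplacian x w
    rw [hx, downCirculation_smul] at this
    linarith
  -- the three down-triangles next to the up-triangle at `v` touch its six neighbours and itself
  have h₁ := down (v + (1, 0))
  have h₂ := down (v - (0, 1))
  rw [add_sub_cancel_right] at h₁
  rw [sub_add_cancel, sub_sub] at h₂
  have hsq : (μ - 3) ^ 2 * upCirculation x v = (μ - 3) * (downCirculation x (v + (1, 0))
      + downCirculation x v + downCirculation x (v - (0, 1))) := by
    rw [← up]; ring
  rw [mul_add, mul_add, h₁, h₂, down, add_comm (0, 1)] at hsq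
  simp only [triangularLaplacian, secondDiff, add_comm (v + (1, 0)) (0, 1), ← add_assoc] at hsq ⊢
  linarith

lemma upCirculation_ne_zero {μ : ℝ} {x : EuclideanSpace ℝ (TorusEdge n)}
    (hx : torusUpLaplacian n x = μ • x) (hx₀ : x ≠ 0) (hμ₀ : μ ≠ 0) (hμ₃ : μ ≠ 3) :
    upCirculation x ≠ 0 := by
  intro hup
  have hdown : downCirculation x = 0 := funext fun v => by
    have := downCirculation_torusUpLaplacian x v
    rw [hx, downCirculation_smul] at this
    simp only [hup, Pi.zero_apply, add_zero] at this
    exact (mul_eq_zero.mp (by linarith : (μ - 3) * downCirculation x v = 0)).resolve_left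
      (sub_ne_zero.mpr hμ₃)
  have hL : torusUpLaplacian n x = 0 := by
    ext e
    simp [torusUpLaplacian_apply, hup, hdown]
  rw [hx, smul_eq_zero] at hL
  exact hL.elim hμ₀ hx₀

end Circulation

end TorusGap

theorem torus_up_laplacian_spectral_gap :
    ∃ C : ℝ, 0 < C ∧ ∀ (n : ℕ) [NeZero n], ∀ μ : ℝ, μ ≠ 0 →
      Module.End.HasEigenvalue (torusUpLaplacian n) μ →
        C * ((1 : ℝ) / n) ^ 2 ≤ μ := by
  refine ⟨1 / 6, by norm_num, fun n _ μ hμ₀ hμ => ?_⟩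
  obtain ⟨x, hx⟩ := hμ.exists_hasEigenvector
  have hn : (1 : ℝ) ≤ n ^ 2 := one_le_pow₀ (by exact_mod_cast NeZero.one_le)
  have key : 1 ≤ 6 * n ^ 2 * μ := by
    rcases le_or_gt (1 / 6) μ with hbig | hsmall
    · nlinarith
    · have hgap := TorusGap.one_le_sq_mul_of_triangularLaplacian_eq_mul _
        (TorusGap.triangularLaplacian_upCirculation hx.apply_eq_smul)
        (TorusGap.upCirculation_ne_zero hx.apply_eq_smul hx.2 hμ₀ (by linarith))
        (by rw [show 6 * μ - μ ^ 2 = μ * (6 - μ) by ring]; exact mul_ne_zero hμ₀ (by linarith))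
      nlinarith [sq_nonneg μ]
  calc 1 / 6 * ((1 : ℝ) / n) ^ 2 = 1 / (6 * n ^ 2) := by ring
    _ ≤ μ := by rw [div_le_iff₀ (by positivity)]; linarith
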